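/- Let n ≥ 2, N ∈ ℕ, and let A, B be symmetric n×n matrices with nonnegative integer entries whose row sums all equal N (the representation matrices of two regular undirected multigraphs on n vertices of common degree N). Then the following are equivalent: (1) there exists a permutation matrix P with B = P A Pᵀ; (2) the linear spans of P(A,A), P(A,B), P(B,B) all have the same dimension Δ, and for every t ∈ (0, √(n−1)] the Δ-dimensional Hausdorff measures (with respect to the Frobenius-norm metric) of B(0,t) ∩ P(A,A), B(0,t) ∩ P(A,B), and B(0,t) ∩ P(B,B) are all equal. -/

import Mathlib

open Matrix MeasureTheory ENNReal

/-- Frobenius norm of a real square matrix: ‖X‖_F = √(tr(X Xᵀ)). -/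
noncomputable def frob {n : ℕ} (X : Matrix (Fin n) (Fin n) ℝ) : ℝ :=
  Real.sqrt ((X * Xᵀ).trace)

/-- A permutation matrix: a 0-1 matrix with exactly one 1 in each row and each column. -/
def IsPermMatrix {n : ℕ} (P : Matrix (Fin n) (Fin n) ℝ) : Prop :=
  (∀ i j, P i j = 0 ∨ P i j = 1) ∧ (∀ i, ∃! j, P i j = 1) ∧ (∀ j, ∃! i, P i j = 1)

/-- The matrix J_n all of whose entries are 1/n. -/
noncomputable def Jmat (n : ℕ) : Matrix (Fin n) (Fin n) ℝ := Matrix.of fun _ _ => (1 / n : ℝ)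

/-- P₀(S,T) = {X ∈ M_n : SX - XT = 0}, where M_n is the set of matrices with all
row and column sums zero. -/
def P0 {n : ℕ} (S T : Matrix (Fin n) (Fin n) ℝ) : Set (Matrix (Fin n) (Fin n) ℝ) :=
  {X | X *ᵥ 1 = 0 ∧ Xᵀ *ᵥ 1 = 0 ∧ S * X - X * T = 0}

/-- P(S,T) = {X ∈ P₀(S,T) : every entry of X is ≥ -1/n}. -/
def Pset {n : ℕ} (S T : Matrix (Fin n) (Fin n) ℝ) : Set (Matrix (Fin n) (Fin n) ℝ) :=
  {X | X ∈ P0 S T ∧ ∀ i j, -(1 / n : ℝ) ≤ X i j}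

/-- P₀(S,T) as a linear subspace of the space of real n×n matrices. -/
def P0sub {n : ℕ} (S T : Matrix (Fin n) (Fin n) ℝ) :
    Submodule ℝ (Matrix (Fin n) (Fin n) ℝ) where
  carrier := P0 S T
  add_mem' := by
    rintro X Y ⟨h1, h2, h3⟩ ⟨g1, g2, g3⟩
    refine ⟨?_, ?_, ?_⟩
    · rw [Matrix.add_mulVec, h1, g1, add_zero]
    · rw [Matrix.transpose_add, Matrix.add_mulVec, h2, g2, add_zero]
    · have h : S * (X + Y) - (X + Y) * T = (S * X - X * T) + (S * Y - Y * T) := by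
        rw [Matrix.mul_add, Matrix.add_mul]; abel
      rw [h, h3, g3, add_zero]
  zero_mem' := by
    refine ⟨?_, ?_, ?_⟩ <;> simp [P0]
  smul_mem' := by
    rintro c X ⟨h1, h2, h3⟩
    refine ⟨?_, ?_, ?_⟩
    · rw [Matrix.smul_mulVec, h1, smul_zero]
    · rw [Matrix.transpose_smul, Matrix.smul_mulVec, h2, smul_zero]
    · have h : S * (c • X) - (c • X) * T = c • (S * X - X * T) := by
        rw [Matrix.mul_smul, Matrix.smul_mul, smul_sub]
      rw [h, h3, smul_zero]

/-- The linear isometric identification of n×n matrices, endowed with the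
Frobenius-norm metric, with the Euclidean space ℝ^(n²); Hausdorff measures of
sets of matrices with respect to the Frobenius metric are computed via this map. -/
noncomputable def matEuclid (n : ℕ) (X : Matrix (Fin n) (Fin n) ℝ) :
    EuclideanSpace ℝ (Fin n × Fin n) :=
  (EuclideanSpace.equiv (Fin n × Fin n) ℝ).symm (fun p => X p.1 p.2)
section S1
open Matrix MeasureTheory ENNReal

variable {n : ℕ}

lemma matEuclid_apply (X : Matrix (Fin n) (Fin n) ℝ) (p : Fin n × Fin n) :
    matEuclid n X p = X p.1 p.2 := rfl

noncomputable def matEquiv (n : ℕ) :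
    Matrix (Fin n) (Fin n) ℝ ≃ₗ[ℝ] EuclideanSpace ℝ (Fin n × Fin n) where
  toFun := matEuclid n
  invFun y := Matrix.of fun i j => y (i, j)
  map_add' X Y := rfl
  map_smul' c X := rfl
  left_inv X := rfl
  right_inv y := rfl

lemma trace_mul_transpose (X : Matrix (Fin n) (Fin n) ℝ) :
    (X * Xᵀ).trace = ∑ p : Fin n × Fin n, (X p.1 p.2) ^ 2 := by
  rw [Matrix.trace, Fintype.sum_prod_type]
  simp [Matrix.diag, Matrix.mul_apply, sq]

lemma norm_matEuclid (X : Matrix (Fin n) (Fin n) ℝ) :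
    ‖matEuclid n X‖ = frob X := by
  rw [frob, trace_mul_transpose, EuclideanSpace.norm_eq]
  congr 1
  refine Finset.sum_congr rfl fun p _ => ?_
  rw [matEuclid_apply, Real.norm_eq_abs, sq_abs]

lemma frob_nonneg (X : Matrix (Fin n) (Fin n) ℝ) : 0 ≤ frob X := Real.sqrt_nonneg _

end S1

section S2
open Matrix MeasureTheory

variable {n : ℕ}

lemma abs_entry_le_frob (X : Matrix (Fin n) (Fin n) ℝ) (i j : Fin n) :
    |X i j| ≤ frob X := by
  rw [frob, trace_mul_transpose, ← Real.sqrt_sq_eq_abs]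
  apply Real.sqrt_le_sqrt
  exact Finset.single_le_sum (f := fun p : Fin n × Fin n => X p.1 p.2 ^ 2)
    (fun p _ => sq_nonneg _) (Finset.mem_univ (i, j))

lemma rowsum_eq {X : Matrix (Fin n) (Fin n) ℝ} (h : X *ᵥ 1 = 0) (i : Fin n) :
    ∑ j, X i j = 0 := by
  have := congrFun h i
  simpa [Matrix.mulVec, dotProduct] using this

lemma colsum_eq {X : Matrix (Fin n) (Fin n) ℝ} (h : Xᵀ *ᵥ 1 = 0) (j : Fin n) :
    ∑ i, X i j = 0 := by
  have := congrFun h j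
  simpa [Matrix.mulVec, dotProduct] using this

lemma ds_bound {Y : Matrix (Fin n) (Fin n) ℝ}
    (h0 : ∀ i j, 0 ≤ Y i j) (hrow : ∀ i, ∑ j, Y i j = 1) :
    ∑ p : Fin n × Fin n, (Y p.1 p.2) ^ 2 ≤ n ∧
      (∑ p : Fin n × Fin n, (Y p.1 p.2) ^ 2 = n →
        ∀ i j, Y i j = 0 ∨ Y i j = 1) := by
  have hle1 : ∀ i j, Y i j ≤ 1 := by
    intro i j
    calc Y i j ≤ ∑ k, Y i k :=
          Finset.single_le_sum (fun k _ => h0 i k) (Finset.mem_univ j)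
    _ = 1 := hrow i
  have hterm : ∀ p : Fin n × Fin n, (Y p.1 p.2) ^ 2 ≤ Y p.1 p.2 := by
    intro p
    nlinarith [h0 p.1 p.2, hle1 p.1 p.2]
  have hsum : ∑ p : Fin n × Fin n, Y p.1 p.2 = n := by
    rw [Fintype.sum_prod_type]
    simp [hrow]
  constructor
  · calc ∑ p : Fin n × Fin n, (Y p.1 p.2) ^ 2 ≤ ∑ p : Fin n × Fin n, Y p.1 p.2 :=
        Finset.sum_le_sum fun p _ => hterm p
    _ = n := hsum
  · intro heq i j
    have hzero : ∑ p : Fin n × Fin n, (Y p.1 p.2 - (Y p.1 p.2) ^ 2) = 0 := by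
      rw [Finset.sum_sub_distrib, hsum, heq, sub_self]
    have := (Finset.sum_eq_zero_iff_of_nonneg
      (fun p _ => by linarith [hterm p])).1 hzero (i, j) (Finset.mem_univ _)
    have h2 : Y i j * (1 - Y i j) = 0 := by nlinarith [this]
    rcases mul_eq_zero.1 h2 with h | h
    · exact Or.inl h
    · exact Or.inr (by linarith)

lemma sum_sq_shift {X : Matrix (Fin n) (Fin n) ℝ} (hn : 0 < n)
    (h1 : ∀ i, ∑ j, X i j = 0) :
    ∑ p : Fin n × Fin n, (X p.1 p.2 + 1 / n) ^ 2 = (X * Xᵀ).trace + 1 := by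
  have hn' : (n : ℝ) ≠ 0 := Nat.cast_ne_zero.2 hn.ne'
  rw [trace_mul_transpose]
  have : ∀ p : Fin n × Fin n, (X p.1 p.2 + 1 / n) ^ 2
      = X p.1 p.2 ^ 2 + (2 / n) * X p.1 p.2 + 1 / (n : ℝ) ^ 2 := by
    intro p; field_simp; ring
  rw [Finset.sum_congr rfl fun p _ => this p]
  rw [Finset.sum_add_distrib, Finset.sum_add_distrib, ← Finset.mul_sum]
  have hx0 : ∑ p : Fin n × Fin n, X p.1 p.2 = 0 := by
    rw [Fintype.sum_prod_type]; simp [h1]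
  rw [hx0, mul_zero, add_zero, Finset.sum_const]
  have : (Finset.univ : Finset (Fin n × Fin n)).card = n * n := by simp
  rw [this]
  field_simp
  rw [nsmul_eq_mul, Nat.cast_mul, ← sq, mul_one_div_cancel (pow_ne_zero 2 hn')]

lemma trace_nonneg' (X : Matrix (Fin n) (Fin n) ℝ) : 0 ≤ (X * Xᵀ).trace := by
  rw [trace_mul_transpose]
  exact Finset.sum_nonneg fun p _ => sq_nonneg _

lemma frob_le_of_mem_Pset {S T X : Matrix (Fin n) (Fin n) ℝ} (hn : 0 < n)
    (hX : X ∈ Pset S T) : frob X ≤ Real.sqrt ((n : ℝ) - 1) := by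
  obtain ⟨⟨h1, h2, _⟩, hent⟩ := hX
  apply Real.sqrt_le_sqrt
  have hb := (ds_bound (Y := Matrix.of fun i j => X i j + 1 / n)
    (fun i j => by simpa using neg_le_iff_add_nonneg.1 (hent i j))
    (fun i => by
      have hn' : (n : ℝ) ≠ 0 := Nat.cast_ne_zero.2 hn.ne'
      simp only [Matrix.of_apply, Finset.sum_add_distrib, rowsum_eq h1 i,
        Finset.sum_const, Finset.card_univ, Fintype.card_fin, zero_add, nsmul_eq_mul]
      field_simp)).1
  have hss := sum_sq_shift hn (rowsum_eq h1)
  simp only [Matrix.of_apply] at hb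
  linarith [hss ▸ hb]

lemma perm_of_eq_sqrt {S T X : Matrix (Fin n) (Fin n) ℝ} (hn : 0 < n)
    (hX : X ∈ Pset S T) (hfr : frob X = Real.sqrt ((n : ℝ) - 1)) :
    ∀ i j, X i j + 1 / n = 0 ∨ X i j + 1 / n = 1 := by
  obtain ⟨⟨h1, h2, _⟩, hent⟩ := hX
  have hn1 : (1 : ℝ) ≤ n := by exact_mod_cast hn
  have htr : (X * Xᵀ).trace = (n : ℝ) - 1 := by
    have := congrArg (fun x => x ^ 2) hfr
    simp only [frob] at this
    rw [Real.sq_sqrt (trace_nonneg' X), Real.sq_sqrt (by linarith)] at this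
    exact this
  have hss := sum_sq_shift hn (rowsum_eq h1)
  have hb := (ds_bound (Y := Matrix.of fun i j => X i j + 1 / n)
    (fun i j => by simpa using neg_le_iff_add_nonneg.1 (hent i j))
    (fun i => by
      have hn' : (n : ℝ) ≠ 0 := Nat.cast_ne_zero.2 hn.ne'
      simp only [Matrix.of_apply, Finset.sum_add_distrib, rowsum_eq h1 i,
        Finset.sum_const, Finset.card_univ, Fintype.card_fin, zero_add, nsmul_eq_mul]
      field_simp)).2
  intro i j
  have := hb (by simp only [Matrix.of_apply]; rw [hss, htr]; ring) i j
  simpa using this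

lemma existsUnique_one {n : ℕ} {f : Fin n → ℝ} (h01 : ∀ j, f j = 0 ∨ f j = 1)
    (hs : ∑ j, f j = 1) : ∃! j, f j = 1 := by
  obtain ⟨j, hj⟩ : ∃ j, f j = 1 := by
    by_contra hc; push_neg at hc
    have hz : ∀ j, f j = 0 := fun j => (h01 j).resolve_right (hc j)
    rw [Finset.sum_eq_zero (fun j _ => hz j)] at hs; norm_num at hs
  refine ⟨j, hj, fun k hk => ?_⟩
  by_contra hne
  have hsub : ∑ x ∈ ({k, j} : Finset (Fin n)), f x ≤ ∑ x, f x :=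
    Finset.sum_le_sum_of_subset_of_nonneg (Finset.subset_univ _)
      (fun x _ _ => by rcases h01 x with h | h <;> simp [h])
  rw [Finset.sum_pair hne, hk, hj, hs] at hsub
  linarith

lemma isPermMatrix_of_01 {Y : Matrix (Fin n) (Fin n) ℝ}
    (h01 : ∀ i j, Y i j = 0 ∨ Y i j = 1)
    (hrow : ∀ i, ∑ j, Y i j = 1) (hcol : ∀ j, ∑ i, Y i j = 1) :
    IsPermMatrix Y :=
  ⟨h01, fun i => existsUnique_one (h01 i) (hrow i),
    fun j => existsUnique_one (fun i => h01 i j) (hcol j)⟩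

end S2

section S3
open Matrix

variable {n : ℕ}

lemma isPermMatrix_exists_perm {P : Matrix (Fin n) (Fin n) ℝ} (hP : IsPermMatrix P) :
    ∃ σ : Equiv.Perm (Fin n), ∀ i j, P i j = if j = σ i then 1 else 0 := by
  obtain ⟨h01, hrow, hcol⟩ := hP
  choose f hf1 hf2 using hrow
  have hinj : Function.Injective f := by
    intro a b hab
    obtain ⟨i, _, hi2⟩ := hcol (f a)
    have ha := hi2 a (hf1 a)
    have hb := hi2 b (by simpa [hab] using hf1 b)
    rw [ha, hb]
  refine ⟨Equiv.ofBijective f (Finite.injective_iff_bijective.1 hinj), fun i j => ?_⟩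
  have hfi : Equiv.ofBijective f (Finite.injective_iff_bijective.1 hinj) i = f i := rfl
  rw [hfi]
  by_cases h : j = f i
  · simp [h, hf1 i]
  · simp only [h, if_false]
    rcases h01 i j with h0 | h1
    · exact h0
    · exact absurd (hf2 i j h1) h

variable {σ : Equiv.Perm (Fin n)} {P : Matrix (Fin n) (Fin n) ℝ}

lemma permEntry_symm (hP : ∀ i j, P i j = if j = σ i then 1 else 0) (i j : Fin n) :
    P i j = if i = σ.symm j then 1 else 0 := by
  rw [hP]
  by_cases h : i = σ.symm j
  · rw [if_pos h, if_pos]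
    rw [h, Equiv.apply_symm_apply]
  · rw [if_neg h, if_neg]
    intro hj
    exact h (by rw [hj, Equiv.symm_apply_apply])

lemma mul_permT_apply (hP : ∀ i j, P i j = if j = σ i then 1 else 0)
    (X : Matrix (Fin n) (Fin n) ℝ) (i j : Fin n) : (X * Pᵀ) i j = X i (σ j) := by
  simp [Matrix.mul_apply, Matrix.transpose_apply, hP, mul_ite]

lemma mul_perm_apply (hP : ∀ i j, P i j = if j = σ i then 1 else 0)
    (X : Matrix (Fin n) (Fin n) ℝ) (i j : Fin n) : (X * P) i j = X i (σ.symm j) := by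
  simp [Matrix.mul_apply, permEntry_symm hP, mul_ite]

lemma perm_mul_apply (hP : ∀ i j, P i j = if j = σ i then 1 else 0)
    (X : Matrix (Fin n) (Fin n) ℝ) (i j : Fin n) : (P * X) i j = X (σ i) j := by
  simp [Matrix.mul_apply, hP, ite_mul]

lemma permT_mul_apply (hP : ∀ i j, P i j = if j = σ i then 1 else 0)
    (X : Matrix (Fin n) (Fin n) ℝ) (i j : Fin n) : (Pᵀ * X) i j = X (σ.symm i) j := by
  simp [Matrix.mul_apply, Matrix.transpose_apply, permEntry_symm hP, ite_mul]

lemma permT_mul_perm (hP : ∀ i j, P i j = if j = σ i then 1 else 0) : Pᵀ * P = 1 := by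
  ext i j
  rw [permT_mul_apply hP, permEntry_symm hP, Matrix.one_apply]
  simp [Equiv.symm_apply_eq, eq_comm]

lemma perm_mul_permT (hP : ∀ i j, P i j = if j = σ i then 1 else 0) : P * Pᵀ = 1 := by
  ext i j
  rw [perm_mul_apply hP, Matrix.transpose_apply, hP, Matrix.one_apply]
  simp [σ.injective.eq_iff, eq_comm]

lemma perm_mulVec_one (hP : ∀ i j, P i j = if j = σ i then 1 else 0) :
    P *ᵥ (1 : Fin n → ℝ) = 1 := by
  funext i
  simp [Matrix.mulVec, dotProduct, hP]

lemma permT_mulVec_one (hP : ∀ i j, P i j = if j = σ i then 1 else 0) :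
    Pᵀ *ᵥ (1 : Fin n → ℝ) = 1 := by
  funext i
  simp [Matrix.mulVec, dotProduct, Matrix.transpose_apply, permEntry_symm hP]

lemma frob_mul_permT (hP : ∀ i j, P i j = if j = σ i then 1 else 0)
    (X : Matrix (Fin n) (Fin n) ℝ) : frob (X * Pᵀ) = frob X := by
  unfold frob
  congr 1
  rw [Matrix.transpose_mul, Matrix.transpose_transpose, Matrix.mul_assoc,
    ← Matrix.mul_assoc Pᵀ P Xᵀ, permT_mul_perm hP, Matrix.one_mul]

lemma frob_conj_perm (hP : ∀ i j, P i j = if j = σ i then 1 else 0)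
    (X : Matrix (Fin n) (Fin n) ℝ) : frob (P * X * Pᵀ) = frob X := by
  have hPtP := permT_mul_perm hP
  unfold frob
  congr 1
  have h : P * X * Pᵀ * (P * X * Pᵀ)ᵀ = P * (X * Xᵀ) * Pᵀ := by
    simp only [Matrix.transpose_mul, Matrix.transpose_transpose]
    simp only [← Matrix.mul_assoc]
    rw [Matrix.mul_assoc (P * X) Pᵀ P, hPtP, Matrix.mul_one]
  rw [h, Matrix.trace_mul_cycle, hPtP, Matrix.one_mul]

lemma Pset_image_right {A B : Matrix (Fin n) (Fin n) ℝ}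
    (hP : ∀ i j, P i j = if j = σ i then 1 else 0) (hB : B = P * A * Pᵀ) :
    (fun X => X * Pᵀ) '' Pset A A = Pset A B := by
  have hPtP := permT_mul_perm hP
  have hPPt := perm_mul_permT hP
  ext Z
  constructor
  · rintro ⟨X, ⟨⟨h1, h2, h3⟩, hent⟩, rfl⟩
    dsimp only
    refine ⟨⟨?_, ?_, ?_⟩, fun i j => ?_⟩
    · rw [← Matrix.mulVec_mulVec, permT_mulVec_one hP, h1]
    · rw [Matrix.transpose_mul, Matrix.transpose_transpose, ← Matrix.mulVec_mulVec,
        h2, Matrix.mulVec_zero]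
    · have hAX : A * X = X * A := sub_eq_zero.1 h3
      rw [hB, sub_eq_zero]
      simp only [← Matrix.mul_assoc]
      rw [Matrix.mul_assoc X Pᵀ P, hPtP, Matrix.mul_one, hAX]
    · rw [mul_permT_apply hP]
      exact hent i (σ j)
  · rintro ⟨⟨h1, h2, h3⟩, hent⟩
    refine ⟨Z * P, ⟨⟨?_, ?_, ?_⟩, fun i j => ?_⟩, ?_⟩
    · rw [← Matrix.mulVec_mulVec, perm_mulVec_one hP, h1]
    · rw [Matrix.transpose_mul, ← Matrix.mulVec_mulVec, h2, Matrix.mulVec_zero]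
    · have hAZ : A * Z = Z * B := sub_eq_zero.1 h3
      rw [sub_eq_zero, ← Matrix.mul_assoc, hAZ, hB]
      simp only [← Matrix.mul_assoc]
      rw [Matrix.mul_assoc (Z * P * A) Pᵀ P, hPtP, Matrix.mul_one]
    · rw [mul_perm_apply hP]
      exact hent i (σ.symm j)
    · dsimp only
      rw [Matrix.mul_assoc, hPPt, Matrix.mul_one]

lemma Pset_image_conj {A B : Matrix (Fin n) (Fin n) ℝ}
    (hP : ∀ i j, P i j = if j = σ i then 1 else 0) (hB : B = P * A * Pᵀ) :
    (fun X => P * X * Pᵀ) '' Pset A A = Pset B B := by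
  have hPtP := permT_mul_perm hP
  have hPPt := perm_mul_permT hP
  have hA : A = Pᵀ * B * P := by
    rw [hB]
    simp only [← Matrix.mul_assoc]
    rw [hPtP, Matrix.one_mul, Matrix.mul_assoc, hPtP, Matrix.mul_one]
  ext Z
  constructor
  · rintro ⟨X, ⟨⟨h1, h2, h3⟩, hent⟩, rfl⟩
    dsimp only
    have hAX : A * X = X * A := sub_eq_zero.1 h3
    refine ⟨⟨?_, ?_, ?_⟩, fun i j => ?_⟩
    · rw [← Matrix.mulVec_mulVec, permT_mulVec_one hP, ← Matrix.mulVec_mulVec, h1,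
        Matrix.mulVec_zero]
    · rw [Matrix.transpose_mul, Matrix.transpose_mul, Matrix.transpose_transpose,
        ← Matrix.mulVec_mulVec, ← Matrix.mulVec_mulVec, permT_mulVec_one hP,
        h2, Matrix.mulVec_zero]
    · rw [sub_eq_zero, hB]
      simp only [← Matrix.mul_assoc]
      rw [Matrix.mul_assoc (P * A) Pᵀ P, hPtP, Matrix.mul_one,
        Matrix.mul_assoc (P * X) Pᵀ P, hPtP, Matrix.mul_one,
        Matrix.mul_assoc P A X, hAX, ← Matrix.mul_assoc]
    · rw [Matrix.mul_assoc, perm_mul_apply hP, mul_permT_apply hP]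
      exact hent (σ i) (σ j)
  · rintro ⟨⟨h1, h2, h3⟩, hent⟩
    have hBZ : B * Z = Z * B := sub_eq_zero.1 h3
    refine ⟨Pᵀ * Z * P, ⟨⟨?_, ?_, ?_⟩, fun i j => ?_⟩, ?_⟩
    · rw [← Matrix.mulVec_mulVec, perm_mulVec_one hP, ← Matrix.mulVec_mulVec, h1,
        Matrix.mulVec_zero]
    · rw [Matrix.transpose_mul, Matrix.transpose_mul, Matrix.transpose_transpose,
        ← Matrix.mulVec_mulVec, ← Matrix.mulVec_mulVec, perm_mulVec_one hP,
        h2, Matrix.mulVec_zero]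
    · rw [sub_eq_zero, hA]
      simp only [← Matrix.mul_assoc]
      rw [Matrix.mul_assoc (Pᵀ * B) P Pᵀ, hPPt, Matrix.mul_one,
        Matrix.mul_assoc (Pᵀ * Z) P Pᵀ, hPPt, Matrix.mul_one,
        Matrix.mul_assoc Pᵀ B Z, hBZ, ← Matrix.mul_assoc]
    · rw [Matrix.mul_assoc, permT_mul_apply hP, mul_perm_apply hP]
      exact hent (σ.symm i) (σ.symm j)
    · dsimp only
      simp only [← Matrix.mul_assoc]
      rw [hPPt, Matrix.one_mul, Matrix.mul_assoc, hPPt, Matrix.mul_one]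

end S3

section S4
open Matrix

variable {n : ℕ}

lemma zero_mem_Pset (hn : 0 < n) (S T : Matrix (Fin n) (Fin n) ℝ) :
    (0 : Matrix (Fin n) (Fin n) ℝ) ∈ Pset S T := by
  have : (0:ℝ) ≤ 1 / n := by positivity
  refine ⟨⟨by simp, by simp, by simp⟩, fun i j => by simpa using this⟩

lemma span_Pset_le (S T : Matrix (Fin n) (Fin n) ℝ) :
    Submodule.span ℝ (Pset S T) ≤ P0sub S T :=
  Submodule.span_le.2 fun X hX => hX.1

lemma mem_Pset_of_small {S T X : Matrix (Fin n) (Fin n) ℝ}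
    (hX : X ∈ P0 S T) (hfr : frob X ≤ 1 / n) : X ∈ Pset S T := by
  refine ⟨hX, fun i j => ?_⟩
  have h := abs_entry_le_frob X i j
  have := abs_le.1 (h.trans hfr)
  linarith [this.1]

lemma convex_Pset (S T : Matrix (Fin n) (Fin n) ℝ) : Convex ℝ (Pset S T) := by
  intro X hX Y hY a b ha hb hab
  refine ⟨(P0sub S T).add_mem ((P0sub S T).smul_mem a hX.1) ((P0sub S T).smul_mem b hY.1),
    fun i j => ?_⟩
  have hx := hX.2 i j
  have hy := hY.2 i j
  have : (a • X + b • Y) i j = a * X i j + b * Y i j := by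
    simp [Matrix.add_apply, Matrix.smul_apply, smul_eq_mul]
  rw [this]
  have h1 : a * (-(1/(n:ℝ))) ≤ a * X i j := mul_le_mul_of_nonneg_left hx ha
  have h2 : b * (-(1/(n:ℝ))) ≤ b * Y i j := mul_le_mul_of_nonneg_left hy hb
  have h3 : a * (-(1/(n:ℝ))) + b * (-(1/(n:ℝ))) = -(1/(n:ℝ)) := by
    linear_combination (-(1/(n:ℝ))) * hab
  linarith

lemma Jmat_transpose : (Jmat n)ᵀ = Jmat n := by
  ext i j; rfl

lemma Jmat_mulVec_one (hn : 0 < n) : Jmat n *ᵥ (1 : Fin n → ℝ) = 1 := by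
  funext i
  have hn' : (n : ℝ) ≠ 0 := Nat.cast_ne_zero.2 hn.ne'
  simp [Matrix.mulVec, dotProduct, Jmat]
  field_simp

lemma mul_Jmat {N : ℕ} {A : Matrix (Fin n) (Fin n) ℝ} (hArow : ∀ i, ∑ j, A i j = (N : ℝ)) :
    A * Jmat n = Matrix.of fun _ _ => (N : ℝ) / n := by
  ext i j
  simp only [Matrix.mul_apply, Jmat, Matrix.of_apply]
  rw [Finset.sum_congr rfl (fun k _ => mul_one_div (A i k) (n:ℝ)), ← Finset.sum_div,
    hArow i]

lemma Jmat_mul {N : ℕ} {A : Matrix (Fin n) (Fin n) ℝ} (hAcol : ∀ j, ∑ i, A i j = (N : ℝ)) :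
    Jmat n * A = Matrix.of fun _ _ => (N : ℝ) / n := by
  ext i j
  simp only [Matrix.mul_apply, Jmat, Matrix.of_apply]
  rw [Finset.sum_congr rfl (fun k _ => one_div_mul_eq_div (n:ℝ) (A k j)), ← Finset.sum_div,
    hAcol j]

lemma colsum_of_symm {N : ℕ} {A : Matrix (Fin n) (Fin n) ℝ} (hAsym : A.IsSymm)
    (hArow : ∀ i, ∑ j, A i j = (N : ℝ)) (j : Fin n) : ∑ i, A i j = (N : ℝ) := by
  have : ∀ i, A i j = A j i := fun i =>
    show Aᵀ j i = A j i from congrFun (congrFun hAsym j) i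
  rw [Finset.sum_congr rfl fun i _ => this i, hArow j]

lemma Jmat_mul_Jmat (hn : 0 < n) : Jmat n * Jmat n = Jmat n := by
  ext i j
  have hn' : (n : ℝ) ≠ 0 := Nat.cast_ne_zero.2 hn.ne'
  simp [Matrix.mul_apply, Jmat]
  field_simp

lemma IJ_mem_Pset {N : ℕ} {A : Matrix (Fin n) (Fin n) ℝ} (hn : 0 < n) (hAsym : A.IsSymm)
    (hArow : ∀ i, ∑ j, A i j = (N : ℝ)) :
    (1 : Matrix (Fin n) (Fin n) ℝ) - Jmat n ∈ Pset A A := by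
  refine ⟨⟨?_, ?_, ?_⟩, fun i j => ?_⟩
  · rw [Matrix.sub_mulVec, Matrix.one_mulVec, Jmat_mulVec_one hn, sub_self]
  · rw [Matrix.transpose_sub, Matrix.transpose_one, Jmat_transpose,
      Matrix.sub_mulVec, Matrix.one_mulVec, Jmat_mulVec_one hn, sub_self]
  · rw [Matrix.mul_sub, Matrix.sub_mul, Matrix.mul_one, Matrix.one_mul,
      mul_Jmat hArow, Jmat_mul (colsum_of_symm hAsym hArow)]
    abel
  · have : ((1 : Matrix (Fin n) (Fin n) ℝ) - Jmat n) i j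
        = (if i = j then (1:ℝ) else 0) - 1 / n := by
      simp [Matrix.sub_apply, Matrix.one_apply, Jmat]
    rw [this]
    rcases eq_or_ne i j with h | h
    · rw [if_pos h]; linarith
    · rw [if_neg h]; linarith

lemma frob_one_sub_Jmat (hn : 0 < n) :
    frob ((1 : Matrix (Fin n) (Fin n) ℝ) - Jmat n) = Real.sqrt ((n : ℝ) - 1) := by
  have hsq : ((1 : Matrix (Fin n) (Fin n) ℝ) - Jmat n) * (1 - Jmat n)ᵀ = 1 - Jmat n := by
    rw [Matrix.transpose_sub, Matrix.transpose_one, Jmat_transpose, Matrix.sub_mul,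
      Matrix.mul_sub, Matrix.mul_sub, Matrix.one_mul, Matrix.one_mul, Matrix.mul_one,
      Jmat_mul_Jmat hn]
    abel
  rw [frob, hsq]
  congr 1
  rw [Matrix.trace_sub, Matrix.trace_one]
  have : (Jmat n).trace = 1 := by
    have hn' : (n : ℝ) ≠ 0 := Nat.cast_ne_zero.2 hn.ne'
    simp [Matrix.trace, Matrix.diag, Jmat]
    field_simp
  rw [this]
  simp

lemma perm_exists_of_frob_eq {N : ℕ} {A B X : Matrix (Fin n) (Fin n) ℝ} (hn : 0 < n)
    (hAsym : A.IsSymm) (hBsym : B.IsSymm)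
    (hArow : ∀ i, ∑ j, A i j = (N : ℝ)) (hBrow : ∀ i, ∑ j, B i j = (N : ℝ))
    (hX : X ∈ Pset A B) (hfr : frob X = Real.sqrt ((n : ℝ) - 1)) :
    ∃ P : Matrix (Fin n) (Fin n) ℝ, IsPermMatrix P ∧ B = P * A * Pᵀ := by
  have hn' : (n : ℝ) ≠ 0 := Nat.cast_ne_zero.2 hn.ne'
  set Y : Matrix (Fin n) (Fin n) ℝ := X + Jmat n with hY
  have hYapply : ∀ i j, Y i j = X i j + 1 / n := fun i j => rfl
  have h01 : ∀ i j, Y i j = 0 ∨ Y i j = 1 := by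
    intro i j
    rw [hYapply]
    exact perm_of_eq_sqrt hn hX hfr i j
  have hrow : ∀ i, ∑ j, Y i j = 1 := by
    intro i
    simp only [hYapply, Finset.sum_add_distrib, rowsum_eq hX.1.1 i, Finset.sum_const,
      Finset.card_univ, Fintype.card_fin, zero_add, nsmul_eq_mul]
    field_simp
  have hcol : ∀ j, ∑ i, Y i j = 1 := by
    intro j
    simp only [hYapply, Finset.sum_add_distrib, colsum_eq hX.1.2.1 j, Finset.sum_const,
      Finset.card_univ, Fintype.card_fin, zero_add, nsmul_eq_mul]
    field_simp
  have hPY : IsPermMatrix Y := isPermMatrix_of_01 h01 hrow hcol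
  have hAY : A * Y = Y * B := by
    have hAX : A * X = X * B := sub_eq_zero.1 hX.1.2.2
    rw [hY, Matrix.mul_add, Matrix.add_mul, hAX, mul_Jmat hArow,
      Jmat_mul (colsum_of_symm hBsym hBrow)]
  obtain ⟨σ, hσ⟩ := isPermMatrix_exists_perm hPY
  have hYtY : Yᵀ * Y = 1 := permT_mul_perm hσ
  have hBY : B = Yᵀ * A * Y := by
    rw [Matrix.mul_assoc, hAY, ← Matrix.mul_assoc, hYtY, Matrix.one_mul]
  refine ⟨Yᵀ, ⟨fun i j => h01 j i, fun i => hPY.2.2 i, fun j => hPY.2.1 j⟩, ?_⟩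
  rw [Matrix.transpose_transpose]
  exact hBY

end S4

section S5
open MeasureTheory Metric

lemma euclid_hausdorff_closedBall_lt_top {d : ℕ} (R : ℝ) :
    μH[(d : ℝ)] (closedBall (0 : EuclideanSpace ℝ (Fin d)) R) < ⊤ := by
  have hd0 : (0:ℝ) ≤ (d:ℝ) := Nat.cast_nonneg d
  set f := WithLp.equiv 2 (Fin d → ℝ) with hf
  have hanti : AntilipschitzWith _ ⇑f := PiLp.antilipschitzWith_ofLp 2 (fun _ : Fin d => ℝ)
  have hlip1 : LipschitzWith 1 ⇑f := PiLp.lipschitzWith_ofLp 2 (fun _ : Fin d => ℝ)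
  have hlipsymm : LipschitzWith _ ⇑f.symm := hanti.to_rightInverse f.right_inv
  have h1 : closedBall (0 : EuclideanSpace ℝ (Fin d)) R
      = ⇑f.symm '' (⇑f '' closedBall 0 R) := by rw [Equiv.symm_image_image]
  have hpi : (μH[(d : ℝ)] : Measure (Fin d → ℝ)) = volume := by
    have := hausdorffMeasure_pi_real (ι := Fin d)
    simpa using this
  have himg : ⇑f '' closedBall (0 : EuclideanSpace ℝ (Fin d)) R ⊆ closedBall 0 R := by
    rintro y ⟨x, hx, rfl⟩
    have h0 : f 0 = 0 := rfl
    have := hlip1.dist_le_mul x 0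
    rw [h0] at this
    rw [mem_closedBall] at hx ⊢
    calc dist (f x) 0 ≤ 1 * dist x 0 := by simpa using this
    _ ≤ R := by simpa using hx
  calc μH[(d:ℝ)] (closedBall (0 : EuclideanSpace ℝ (Fin d)) R)
      = μH[(d:ℝ)] (⇑f.symm '' (⇑f '' closedBall 0 R)) := by rw [← h1]
    _ ≤ _ ^ (d:ℝ) * μH[(d:ℝ)] (⇑f '' closedBall 0 R) :=
        hlipsymm.hausdorffMeasure_image_le hd0 _
    _ ≤ _ ^ (d:ℝ) * μH[(d:ℝ)] (closedBall (0 : Fin d → ℝ) R) := by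
        gcongr
    _ < ⊤ := by
        rw [hpi]
        exact ENNReal.mul_lt_top (ENNReal.rpow_lt_top_of_nonneg hd0 ENNReal.coe_ne_top)
          measure_closedBall_lt_top

lemma euclid_hausdorff_closedBall_pos {d : ℕ} (hd : 0 < d) {r : ℝ} (hr : 0 < r) :
    0 < μH[(d : ℝ)] (closedBall (0 : EuclideanSpace ℝ (Fin d)) r) := by
  have hd0 : (0:ℝ) ≤ (d:ℝ) := Nat.cast_nonneg d
  set f := WithLp.equiv 2 (Fin d → ℝ) with hf
  have hanti : AntilipschitzWith _ ⇑f := PiLp.antilipschitzWith_ofLp 2 (fun _ : Fin d => ℝ)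
  have hlip1 : LipschitzWith 1 ⇑f := PiLp.lipschitzWith_ofLp 2 (fun _ : Fin d => ℝ)
  set K := (Fintype.card (Fin d) : NNReal) ^ ((1:ℝ≥0∞) / 2).toReal with hK
  have hcard : (0:NNReal) < (Fintype.card (Fin d) : NNReal) := by
    rw [Fintype.card_fin]; exact_mod_cast hd
  have hKpos : 0 < K := NNReal.rpow_pos hcard
  have hr' : 0 < r / K := div_pos hr (by exact_mod_cast hKpos)
  have hpi : (μH[(d : ℝ)] : Measure (Fin d → ℝ)) = volume := by
    have := hausdorffMeasure_pi_real (ι := Fin d)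
    simpa using this
  have hsub : closedBall (0 : Fin d → ℝ) (r / K) ⊆ ⇑f '' closedBall 0 r := by
    intro x hx
    refine ⟨f.symm x, ?_, f.apply_symm_apply x⟩
    rw [mem_closedBall] at hx ⊢
    have h0 : f (0 : EuclideanSpace ℝ (Fin d)) = 0 := rfl
    have := hanti.le_mul_dist (f.symm x) 0
    rw [f.apply_symm_apply, h0] at this
    calc dist (f.symm x) 0 ≤ K * dist x 0 := this
    _ ≤ K * (r / K) := by
        apply mul_le_mul_of_nonneg_left hx (by positivity)
    _ = r := by field_simp
  have hlow : 0 < μH[(d:ℝ)] (⇑f '' closedBall (0 : EuclideanSpace ℝ (Fin d)) r) := by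
    refine lt_of_lt_of_le ?_ (measure_mono hsub)
    rw [hpi]
    exact measure_closedBall_pos volume _ hr'
  have := hlip1.hausdorffMeasure_image_le hd0 (closedBall (0 : EuclideanSpace ℝ (Fin d)) r)
  calc (0:ℝ≥0∞) < μH[(d:ℝ)] (⇑f '' closedBall 0 r) := hlow
  _ ≤ (1:ℝ≥0∞) ^ (d:ℝ) * μH[(d:ℝ)] (closedBall (0 : EuclideanSpace ℝ (Fin d)) r) := by
      simpa using this
  _ = μH[(d:ℝ)] (closedBall (0 : EuclideanSpace ℝ (Fin d)) r) := by simp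

variable {E' : Type*} [NormedAddCommGroup E'] [InnerProductSpace ℝ E'] [FiniteDimensional ℝ E']
  [MeasurableSpace E'] [BorelSpace E']

lemma hausdorff_subspace_lt_top (W : Submodule ℝ E') (s : Set E') (hsW : s ⊆ (W : Set E'))
    (R : ℝ) (hsR : s ⊆ closedBall 0 R) :
    μH[(Module.finrank ℝ W : ℝ)] s < ⊤ := by
  set d := Module.finrank ℝ W with hd
  have hd0 : (0:ℝ) ≤ (d:ℝ) := Nat.cast_nonneg d
  have hval : Isometry ((↑) : W → E') := W.subtypeₗᵢ.isometry
  have hs : s = ((↑) : W → E') '' (((↑) : W → E') ⁻¹' s) := by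
    rw [Set.image_preimage_eq_inter_range, Subtype.range_coe]
    exact (Set.inter_eq_self_of_subset_left hsW).symm
  rw [hs, hval.hausdorffMeasure_image (Or.inl hd0)]
  set φ := (stdOrthonormalBasis ℝ W).repr
  rw [← φ.isometry.hausdorffMeasure_image (Or.inl hd0)]
  refine lt_of_le_of_lt (measure_mono ?_) (euclid_hausdorff_closedBall_lt_top R)
  rintro y ⟨w, hw, rfl⟩
  rw [mem_closedBall_zero_iff, φ.norm_map]
  have : (w : E') ∈ closedBall 0 R := hsR hw
  rw [mem_closedBall_zero_iff] at this
  simpa using this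

lemma hausdorff_subspace_ball_pos (W : Submodule ℝ E') (hW : 0 < Module.finrank ℝ W)
    {r : ℝ} (hr : 0 < r) :
    0 < μH[(Module.finrank ℝ W : ℝ)] (((↑) : W → E') '' closedBall 0 r) := by
  set d := Module.finrank ℝ W with hd
  have hd0 : (0:ℝ) ≤ (d:ℝ) := Nat.cast_nonneg d
  have hval : Isometry ((↑) : W → E') := W.subtypeₗᵢ.isometry
  rw [hval.hausdorffMeasure_image (Or.inl hd0)]
  set φ := (stdOrthonormalBasis ℝ W).repr
  rw [← φ.isometry.hausdorffMeasure_image (Or.inl hd0)]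
  have h3 : ⇑φ '' closedBall 0 r = closedBall 0 r := by
    rw [φ.image_closedBall, map_zero]
  rw [h3]
  exact euclid_hausdorff_closedBall_pos hW hr

lemma hausdorff_image_add {c : E'} {dd : ℝ} (hd : 0 ≤ dd) (s : Set E') :
    μH[dd] ((fun x => c + x) '' s) = μH[dd] s :=
  (Isometry.of_dist_eq fun a b => dist_add_left c a b).hausdorffMeasure_image (Or.inl hd) s

end S5

section S6
open Matrix Metric MeasureTheory

variable {n : ℕ}

lemma coord_continuous (p : Fin n × Fin n) :
    Continuous (fun y : EuclideanSpace ℝ (Fin n × Fin n) => y p) :=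
  (continuous_apply p).comp (PiLp.continuous_ofLp 2 _)

lemma matEuclid_image_Pset (S T : Matrix (Fin n) (Fin n) ℝ) :
    matEuclid n '' Pset S T =
      {y : EuclideanSpace ℝ (Fin n × Fin n) |
        (∀ i, ∑ j, y (i, j) = 0) ∧ (∀ j, ∑ i, y (i, j) = 0) ∧
        (∀ i j, ∑ k, S i k * y (k, j) = ∑ k, y (i, k) * T k j) ∧
        (∀ i j, -(1 / n : ℝ) ≤ y (i, j))} := by
  ext y
  constructor
  · rintro ⟨X, ⟨⟨h1, h2, h3⟩, hent⟩, rfl⟩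
    have h3' : S * X = X * T := sub_eq_zero.1 h3
    refine ⟨fun i => rowsum_eq h1 i, fun j => colsum_eq h2 j, fun i j => ?_, fun i j => hent i j⟩
    have := congrFun (congrFun h3' i) j
    simpa [Matrix.mul_apply, matEuclid_apply] using this
  · rintro ⟨c1, c2, c3, c4⟩
    refine ⟨Matrix.of fun i j => y (i, j), ⟨⟨?_, ?_, ?_⟩, fun i j => c4 i j⟩, rfl⟩
    · funext i
      simpa [Matrix.mulVec, dotProduct] using c1 i
    · funext j
      simpa [Matrix.mulVec, dotProduct, Matrix.transpose_apply] using c2 j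
    · rw [sub_eq_zero]
      ext i j
      simpa [Matrix.mul_apply] using c3 i j
  
lemma matEuclid_Pset_subset_ball (hn : 0 < n) (S T : Matrix (Fin n) (Fin n) ℝ) :
    matEuclid n '' Pset S T ⊆ closedBall 0 (Real.sqrt ((n : ℝ) - 1)) := by
  rintro y ⟨X, hX, rfl⟩
  rw [mem_closedBall_zero_iff, norm_matEuclid]
  exact frob_le_of_mem_Pset hn hX

lemma isCompact_matEuclid_Pset (hn : 0 < n) (S T : Matrix (Fin n) (Fin n) ℝ) :
    IsCompact (matEuclid n '' Pset S T) := by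
  apply isCompact_of_isClosed_isBounded
  · rw [matEuclid_image_Pset]
    have hcont : ∀ (c : Finset (Fin n)) (g : Fin n → Fin n × Fin n) (a : Fin n → ℝ),
        Continuous (fun y : EuclideanSpace ℝ (Fin n × Fin n) => ∑ k ∈ c, a k * y (g k)) :=
      fun c g a => continuous_finset_sum _ fun k _ => continuous_const.mul (coord_continuous (g k))
    simp only [Set.setOf_and, Set.setOf_forall]
    refine IsClosed.inter ?_ (IsClosed.inter ?_ (IsClosed.inter ?_ ?_))
    · exact isClosed_iInter fun i => isClosed_eq
        (continuous_finset_sum _ fun j _ => coord_continuous (i, j)) continuous_const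
    · exact isClosed_iInter fun j => isClosed_eq
        (continuous_finset_sum _ fun i _ => coord_continuous (i, j)) continuous_const
    · exact isClosed_iInter fun i => isClosed_iInter fun j => isClosed_eq
        (continuous_finset_sum _ fun k _ => continuous_const.mul (coord_continuous (k, j)))
        (continuous_finset_sum _ fun k _ => (coord_continuous (i, k)).mul continuous_const)
    · exact isClosed_iInter fun i => isClosed_iInter fun j =>
        isClosed_le continuous_const (coord_continuous (i, j))
  · exact (isBounded_closedBall).subset (matEuclid_Pset_subset_ball hn S T)

lemma matEuclid_image_inter_ball (S T : Matrix (Fin n) (Fin n) ℝ) (t : ℝ) :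
    matEuclid n '' ({X | frob X ≤ t} ∩ Pset S T)
      = closedBall 0 t ∩ matEuclid n '' Pset S T := by
  ext y
  constructor
  · rintro ⟨X, ⟨hfr, hX⟩, rfl⟩
    exact ⟨by rw [mem_closedBall_zero_iff, norm_matEuclid]; exact hfr, X, hX, rfl⟩
  · rintro ⟨hy, X, hX, rfl⟩
    exact ⟨X, ⟨by rw [Set.mem_setOf_eq, ← norm_matEuclid]; exact mem_closedBall_zero_iff.1 hy,
      hX⟩, rfl⟩

end S6

section S7
open Matrix Metric MeasureTheory

lemma backward_main {n N : ℕ} (hn : 2 ≤ n) {A B : Matrix (Fin n) (Fin n) ℝ}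
    (hAsym : A.IsSymm) (hBsym : B.IsSymm)
    (hArow : ∀ i, ∑ j, A i j = (N : ℝ)) (hBrow : ∀ i, ∑ j, B i j = (N : ℝ))
    (hmeas : ∀ t ∈ Set.Ioc (0 : ℝ) (Real.sqrt ((n : ℝ) - 1)),
      μH[(Module.finrank ℝ (Submodule.span ℝ (Pset A A)) : ℝ)]
          (matEuclid n '' ({X | frob X ≤ t} ∩ Pset A A)) =
        μH[(Module.finrank ℝ (Submodule.span ℝ (Pset A A)) : ℝ)]
          (matEuclid n '' ({X | frob X ≤ t} ∩ Pset A B))) :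
    ∃ P : Matrix (Fin n) (Fin n) ℝ, IsPermMatrix P ∧ B = P * A * Pᵀ := by
  by_contra hcon
  have hn0 : 0 < n := by omega
  set t' := Real.sqrt ((n : ℝ) - 1) with ht'
  have hn1 : (1:ℝ) ≤ (n:ℝ) - 1 := by
    have h2 : (2:ℝ) ≤ n := by exact_mod_cast hn
    linarith
  have htpos : 0 < t' := Real.sqrt_pos.2 (by linarith)
  set Δ := Module.finrank ℝ (Submodule.span ℝ (Pset A A)) with hΔ
  have hΔ0 : (0:ℝ) ≤ (Δ:ℝ) := Nat.cast_nonneg Δ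
  set KAA := matEuclid n '' Pset A A with hKAA
  set KAB := matEuclid n '' Pset A B with hKAB
  have hlt : ∀ y ∈ KAB, ‖y‖ < t' := by
    rintro y ⟨X, hX, rfl⟩
    rw [norm_matEuclid]
    rcases lt_or_eq_of_le (frob_le_of_mem_Pset hn0 hX) with h | h
    · exact h
    · exact absurd (perm_exists_of_frob_eq hn0 hAsym hBsym hArow hBrow hX h) hcon
  have hcompAB : IsCompact KAB := isCompact_matEuclid_Pset hn0 A B
  have hne : KAB.Nonempty := ⟨matEuclid n 0, 0, zero_mem_Pset hn0 A B, rfl⟩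
  obtain ⟨y₀, hy₀K, hy₀max⟩ := hcompAB.exists_isMaxOn hne continuous_norm.continuousOn
  set t₁ := max ‖y₀‖ (t' / 2) with ht₁
  have ht₁pos : 0 < t₁ := lt_of_lt_of_le (by linarith) (le_max_right _ _)
  have ht₁lt : t₁ < t' := max_lt (hlt y₀ hy₀K) (by linarith)
  have hsubAB : KAB ⊆ closedBall 0 t₁ := fun y hy =>
    mem_closedBall_zero_iff.2 ((hy₀max hy).trans (le_max_left _ _))
  have hPsetAA_full : {X | frob X ≤ t'} ∩ Pset A A = Pset A A :=
    Set.inter_eq_self_of_subset_right fun X hX => frob_le_of_mem_Pset hn0 hX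
  have hPsetAB_full : {X | frob X ≤ t'} ∩ Pset A B = Pset A B :=
    Set.inter_eq_self_of_subset_right fun X hX => frob_le_of_mem_Pset hn0 hX
  have heq_top : μH[(Δ:ℝ)] KAA = μH[(Δ:ℝ)] KAB := by
    have h := hmeas t' ⟨htpos, le_refl _⟩
    rwa [hPsetAA_full, hPsetAB_full] at h
  have heq_t₁ : μH[(Δ:ℝ)] (closedBall 0 t₁ ∩ KAA) = μH[(Δ:ℝ)] KAA := by
    have h := hmeas t₁ ⟨ht₁pos, le_of_lt ht₁lt⟩
    rw [matEuclid_image_inter_ball, matEuclid_image_inter_ball] at h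
    rw [h, Set.inter_eq_self_of_subset_right hsubAB, ← heq_top]
  set W := Submodule.map (matEquiv n).toLinearMap (Submodule.span ℝ (Pset A A)) with hW
  have hWrank : Module.finrank ℝ W = Δ := LinearEquiv.finrank_map_eq (matEquiv n) _
  have hKAAW : KAA ⊆ (W : Set (EuclideanSpace ℝ (Fin n × Fin n))) := by
    rintro y ⟨X, hX, rfl⟩
    exact ⟨X, Submodule.subset_span hX, rfl⟩
  have hfin : μH[(Δ:ℝ)] KAA < ⊤ := by
    rw [← hWrank]
    exact hausdorff_subspace_lt_top W KAA hKAAW t' (matEuclid_Pset_subset_ball hn0 A A)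
  have hΔpos : 0 < Δ := by
    rw [hΔ, Module.finrank_pos_iff_exists_ne_zero]
    refine ⟨⟨1 - Jmat n, Submodule.subset_span (IJ_mem_Pset hn0 hAsym hArow)⟩, ?_⟩
    intro hzero
    have h00 : ((1 : Matrix (Fin n) (Fin n) ℝ) - Jmat n) ⟨0, hn0⟩ ⟨0, hn0⟩ = 0 := by
      have := congrArg
        (fun v : Submodule.span ℝ (Pset A A) =>
          (v : Matrix (Fin n) (Fin n) ℝ) ⟨0, hn0⟩ ⟨0, hn0⟩) hzero
      simpa using this
    rw [Matrix.sub_apply, Matrix.one_apply_eq] at h00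
    have hJ : Jmat n ⟨0, hn0⟩ ⟨0, hn0⟩ = 1 / n := rfl
    rw [hJ] at h00
    have hnn : (1:ℝ)/n < 1 := by
      rw [div_lt_one (by exact_mod_cast hn0)]
      exact_mod_cast hn
    linarith
  set θ := (t₁ + t') / (2 * t') with hθ
  have hθ0 : 0 < θ := by positivity
  have hθ1 : θ < 1 := by
    rw [hθ, div_lt_one (by linarith)]
    linarith
  have hθt : θ * t' = (t₁ + t') / 2 := by
    rw [hθ, div_mul_eq_mul_div, div_eq_div_iff (mul_pos two_pos htpos).ne' two_ne_zero]
    ring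
  set ρ := min ((t' - t₁) / 4) ((1 - θ) / n) with hρ
  have hρ0 : 0 < ρ := lt_min (by linarith) (div_pos (by linarith) (by exact_mod_cast hn0))
  set x₀ := matEuclid n (1 - Jmat n) with hx₀def
  set c := θ • x₀ with hc
  have hnormx₀ : ‖x₀‖ = t' := by rw [hx₀def, norm_matEuclid, frob_one_sub_Jmat hn0]
  have hincl : (fun x => c + x) '' (((↑) : W → EuclideanSpace ℝ (Fin n × Fin n)) ''
      closedBall 0 ρ) ⊆ KAA \ closedBall 0 t₁ := by
    rintro _ ⟨_, ⟨w, hwball, rfl⟩, rfl⟩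
    have hwnorm : ‖(w : EuclideanSpace ℝ (Fin n × Fin n))‖ ≤ ρ := by
      have h := mem_closedBall_zero_iff.1 hwball
      simpa using h
    obtain ⟨V, hVspan, hVw⟩ := Submodule.mem_map.1 w.2
    have h1θ : (0:ℝ) < 1 - θ := by linarith
    set Z := (1 - θ)⁻¹ • V with hZ
    have hZP0 : Z ∈ P0 A A :=
      (P0sub A A).smul_mem _ (span_Pset_le A A hVspan)
    have hmV : matEuclid n V = (w : EuclideanSpace ℝ (Fin n × Fin n)) := hVw
    have hfrobZ : frob Z ≤ 1 / n := by
      rw [← norm_matEuclid]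
      have : matEuclid n Z = (1 - θ)⁻¹ • matEuclid n V := by
        ext p
        simp [matEuclid_apply, hZ, PiLp.smul_apply, Matrix.smul_apply, smul_eq_mul]
      rw [this, hmV, norm_smul, Real.norm_eq_abs, abs_of_pos (by positivity)]
      calc (1 - θ)⁻¹ * ‖(w : EuclideanSpace ℝ (Fin n × Fin n))‖ ≤ (1 - θ)⁻¹ * ((1 - θ) / n) := by
            apply mul_le_mul_of_nonneg_left (hwnorm.trans (min_le_right _ _)) (by positivity)
      _ = 1 / n := by field_simp
    have hZmem : Z ∈ Pset A A := mem_Pset_of_small hZP0 hfrobZ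
    have hXmem : θ • ((1 : Matrix (Fin n) (Fin n) ℝ) - Jmat n) + (1 - θ) • Z ∈ Pset A A :=
      convex_Pset A A (IJ_mem_Pset hn0 hAsym hArow) hZmem hθ0.le h1θ.le (by ring)
    have hZV : (1 - θ) • Z = V := smul_inv_smul₀ h1θ.ne' V
    rw [hZV] at hXmem
    have hmX : matEuclid n (θ • ((1 : Matrix (Fin n) (Fin n) ℝ) - Jmat n) + V)
        = c + (w : EuclideanSpace ℝ (Fin n × Fin n)) := by
      have : matEuclid n (θ • ((1 : Matrix (Fin n) (Fin n) ℝ) - Jmat n) + V)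
          = θ • matEuclid n (1 - Jmat n) + matEuclid n V := by
        ext p
        simp [matEuclid_apply, PiLp.add_apply, PiLp.smul_apply, Matrix.add_apply,
          Matrix.smul_apply, smul_eq_mul]
      rw [this, hmV, hc, hx₀def]
    have hnormlow : t₁ < ‖c + (w : EuclideanSpace ℝ (Fin n × Fin n))‖ := by
      have htri : ‖c‖ - ‖-(w : EuclideanSpace ℝ (Fin n × Fin n))‖
          ≤ ‖c - -(w : EuclideanSpace ℝ (Fin n × Fin n))‖ := norm_sub_norm_le _ _
      rw [sub_neg_eq_add, norm_neg] at htri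
      have hcnorm : ‖c‖ = θ * t' := by
        rw [hc, norm_smul, Real.norm_eq_abs, abs_of_pos hθ0, hnormx₀]
      have hρle : ρ ≤ (t' - t₁) / 4 := min_le_left _ _
      have : t₁ < θ * t' - ρ := by
        rw [hθt]
        linarith
      calc t₁ < θ * t' - ρ := this
      _ ≤ ‖c‖ - ‖(w : EuclideanSpace ℝ (Fin n × Fin n))‖ := by
          rw [hcnorm]
          linarith
      _ ≤ ‖c + (w : EuclideanSpace ℝ (Fin n × Fin n))‖ := htri
    refine ⟨⟨_, hXmem, hmX⟩, fun hball => ?_⟩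
    exact absurd (mem_closedBall_zero_iff.1 hball) (not_le.2 hnormlow)
  have hpos : 0 < μH[(Δ:ℝ)] (KAA \ closedBall 0 t₁) := by
    refine lt_of_lt_of_le ?_ (measure_mono hincl)
    rw [hausdorff_image_add hΔ0, ← hWrank]
    exact hausdorff_subspace_ball_pos W (by rw [hWrank]; exact hΔpos) hρ0
  have hdecomp : μH[(Δ:ℝ)] (KAA ∩ closedBall 0 t₁) + μH[(Δ:ℝ)] (KAA \ closedBall 0 t₁)
      = μH[(Δ:ℝ)] KAA := measure_inter_add_diff _ measurableSet_closedBall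
  rw [Set.inter_comm] at heq_t₁
  rw [heq_t₁] at hdecomp
  have hzero : μH[(Δ:ℝ)] (KAA \ closedBall 0 t₁) = 0 := by
    nth_rewrite 2 [← add_zero (μH[(Δ:ℝ)] KAA)] at hdecomp
    exact (ENNReal.add_right_inj hfin.ne).1 hdecomp
  exact absurd hzero hpos.ne'

end S7

section S8
open Matrix Metric MeasureTheory

variable {n : ℕ} {σ : Equiv.Perm (Fin n)} {P : Matrix (Fin n) (Fin n) ℝ}

lemma finrank_span_Pset_right {A B : Matrix (Fin n) (Fin n) ℝ}
    (hP : ∀ i j, P i j = if j = σ i then 1 else 0) (hB : B = P * A * Pᵀ) :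
    Module.finrank ℝ (Submodule.span ℝ (Pset A B))
      = Module.finrank ℝ (Submodule.span ℝ (Pset A A)) := by
  have hPtP := permT_mul_perm hP
  have hPPt := perm_mul_permT hP
  let e : Matrix (Fin n) (Fin n) ℝ ≃ₗ[ℝ] Matrix (Fin n) (Fin n) ℝ :=
    LinearEquiv.ofLinear (LinearMap.mulRight ℝ Pᵀ) (LinearMap.mulRight ℝ P)
      (by
        apply LinearMap.ext; intro X
        simp only [LinearMap.coe_comp, Function.comp_apply, LinearMap.mulRight_apply,
          LinearMap.id_apply]
        rw [Matrix.mul_assoc, hPPt, Matrix.mul_one])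
      (by
        apply LinearMap.ext; intro X
        simp only [LinearMap.coe_comp, Function.comp_apply, LinearMap.mulRight_apply,
          LinearMap.id_apply]
        rw [Matrix.mul_assoc, hPtP, Matrix.mul_one])
  have hce : ⇑e = fun X => X * Pᵀ := rfl
  have himg : ⇑e '' Pset A A = Pset A B := by
    rw [hce]
    exact Pset_image_right hP hB
  calc Module.finrank ℝ (Submodule.span ℝ (Pset A B))
      = Module.finrank ℝ (Submodule.span ℝ (⇑e '' Pset A A)) := by rw [himg]
    _ = Module.finrank ℝ (Submodule.map e.toLinearMap (Submodule.span ℝ (Pset A A))) := by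
        rw [← LinearEquiv.coe_coe, Submodule.span_image]
    _ = Module.finrank ℝ (Submodule.span ℝ (Pset A A)) := LinearEquiv.finrank_map_eq e _

lemma finrank_span_Pset_conj {A B : Matrix (Fin n) (Fin n) ℝ}
    (hP : ∀ i j, P i j = if j = σ i then 1 else 0) (hB : B = P * A * Pᵀ) :
    Module.finrank ℝ (Submodule.span ℝ (Pset B B))
      = Module.finrank ℝ (Submodule.span ℝ (Pset A A)) := by
  have hPtP := permT_mul_perm hP
  have hPPt := perm_mul_permT hP
  let e : Matrix (Fin n) (Fin n) ℝ ≃ₗ[ℝ] Matrix (Fin n) (Fin n) ℝ :=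
    LinearEquiv.ofLinear
      ((LinearMap.mulRight ℝ Pᵀ).comp (LinearMap.mulLeft ℝ P))
      ((LinearMap.mulRight ℝ P).comp (LinearMap.mulLeft ℝ Pᵀ))
      (by
        apply LinearMap.ext; intro X
        simp only [LinearMap.coe_comp, Function.comp_apply, LinearMap.mulRight_apply,
          LinearMap.mulLeft_apply, LinearMap.id_apply]
        simp only [← Matrix.mul_assoc]
        rw [hPPt, Matrix.one_mul, Matrix.mul_assoc, hPPt, Matrix.mul_one])
      (by
        apply LinearMap.ext; intro X
        simp only [LinearMap.coe_comp, Function.comp_apply, LinearMap.mulRight_apply,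
          LinearMap.mulLeft_apply, LinearMap.id_apply]
        simp only [← Matrix.mul_assoc]
        rw [hPtP, Matrix.one_mul, Matrix.mul_assoc, hPtP, Matrix.mul_one])
  have hce : ⇑e = fun X => P * X * Pᵀ := rfl
  have himg : ⇑e '' Pset A A = Pset B B := by
    rw [hce]
    exact Pset_image_conj hP hB
  calc Module.finrank ℝ (Submodule.span ℝ (Pset B B))
      = Module.finrank ℝ (Submodule.span ℝ (⇑e '' Pset A A)) := by rw [himg]
    _ = Module.finrank ℝ (Submodule.map e.toLinearMap (Submodule.span ℝ (Pset A A))) := by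
        rw [← LinearEquiv.coe_coe, Submodule.span_image]
    _ = Module.finrank ℝ (Submodule.span ℝ (Pset A A)) := LinearEquiv.finrank_map_eq e _

lemma measure_image_right_eq {A B : Matrix (Fin n) (Fin n) ℝ}
    (hP : ∀ i j, P i j = if j = σ i then 1 else 0) (hB : B = P * A * Pᵀ)
    (t : ℝ) {d : ℝ} (hd : 0 ≤ d) :
    μH[d] (matEuclid n '' ({X | frob X ≤ t} ∩ Pset A B)) =
      μH[d] (matEuclid n '' ({X | frob X ≤ t} ∩ Pset A A)) := by
  have him := Pset_image_right hP hB
  have hset : {X | frob X ≤ t} ∩ Pset A B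
      = (fun X => X * Pᵀ) '' ({X | frob X ≤ t} ∩ Pset A A) := by
    ext Z
    constructor
    · rintro ⟨hfr, hZB⟩
      rw [← him] at hZB
      obtain ⟨X, hX, rfl⟩ := hZB
      exact ⟨X, ⟨by rwa [Set.mem_setOf_eq, ← frob_mul_permT hP X], hX⟩, rfl⟩
    · rintro ⟨X, ⟨hfr, hX⟩, rfl⟩
      refine ⟨by rw [Set.mem_setOf_eq, frob_mul_permT hP]; exact hfr, ?_⟩
      rw [← him]
      exact ⟨X, hX, rfl⟩
  set ε : (Fin n × Fin n) ≃ (Fin n × Fin n) := (Equiv.prodCongr (Equiv.refl (Fin n)) σ).symm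
    with hε
  set eR := LinearIsometryEquiv.piLpCongrLeft 2 ℝ ℝ ε with heR
  have hcomp : ∀ X : Matrix (Fin n) (Fin n) ℝ,
      matEuclid n (X * Pᵀ) = eR (matEuclid n X) := by
    intro X
    ext p
    rw [heR, LinearIsometryEquiv.piLpCongrLeft_apply, Equiv.piCongrLeft'_apply]
    rw [matEuclid_apply, mul_permT_apply hP]
    have : ε.symm p = (p.1, σ p.2) := by
      rw [hε]
      rfl
    rw [this, matEuclid_apply]
  rw [hset, Set.image_image]
  have : (fun X => matEuclid n (X * Pᵀ)) '' ({X | frob X ≤ t} ∩ Pset A A)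
      = ⇑eR '' (matEuclid n '' ({X | frob X ≤ t} ∩ Pset A A)) := by
    rw [Set.image_image]
    exact Set.image_congr fun X _ => hcomp X
  rw [this, eR.isometry.hausdorffMeasure_image (Or.inl hd)]

lemma measure_image_conj_eq {A B : Matrix (Fin n) (Fin n) ℝ}
    (hP : ∀ i j, P i j = if j = σ i then 1 else 0) (hB : B = P * A * Pᵀ)
    (t : ℝ) {d : ℝ} (hd : 0 ≤ d) :
    μH[d] (matEuclid n '' ({X | frob X ≤ t} ∩ Pset B B)) =
      μH[d] (matEuclid n '' ({X | frob X ≤ t} ∩ Pset A A)) := by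
  have him := Pset_image_conj hP hB
  have hset : {X | frob X ≤ t} ∩ Pset B B
      = (fun X => P * X * Pᵀ) '' ({X | frob X ≤ t} ∩ Pset A A) := by
    ext Z
    constructor
    · rintro ⟨hfr, hZB⟩
      rw [← him] at hZB
      obtain ⟨X, hX, rfl⟩ := hZB
      exact ⟨X, ⟨by rwa [Set.mem_setOf_eq, ← frob_conj_perm hP X], hX⟩, rfl⟩
    · rintro ⟨X, ⟨hfr, hX⟩, rfl⟩
      refine ⟨by rw [Set.mem_setOf_eq, frob_conj_perm hP]; exact hfr, ?_⟩
      rw [← him]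
      exact ⟨X, hX, rfl⟩
  set ε : (Fin n × Fin n) ≃ (Fin n × Fin n) := (Equiv.prodCongr σ σ).symm with hε
  set eC := LinearIsometryEquiv.piLpCongrLeft 2 ℝ ℝ ε with heC
  have hcomp : ∀ X : Matrix (Fin n) (Fin n) ℝ,
      matEuclid n (P * X * Pᵀ) = eC (matEuclid n X) := by
    intro X
    ext p
    rw [heC, LinearIsometryEquiv.piLpCongrLeft_apply, Equiv.piCongrLeft'_apply]
    rw [matEuclid_apply]
    have happ : (P * X * Pᵀ) p.1 p.2 = X (σ p.1) (σ p.2) := by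
      rw [Matrix.mul_assoc, perm_mul_apply hP, mul_permT_apply hP]
    rw [happ]
    have : ε.symm p = (σ p.1, σ p.2) := by
      rw [hε]
      rfl
    rw [this, matEuclid_apply]
  rw [hset, Set.image_image]
  have : (fun X => matEuclid n (P * X * Pᵀ)) '' ({X | frob X ≤ t} ∩ Pset A A)
      = ⇑eC '' (matEuclid n '' ({X | frob X ≤ t} ∩ Pset A A)) := by
    rw [Set.image_image]
    exact Set.image_congr fun X _ => hcomp X
  rw [this, eC.isometry.hausdorffMeasure_image (Or.inl hd)]

end S8

/-- For symmetric A, B with nonnegative integer entries and all row sums equal to N,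
A and B are permutationally similar iff the linear spans of P(A,A), P(A,B), P(B,B)
have the same dimension Δ and for every t ∈ (0, √(n-1)] the Δ-dimensional Hausdorff
measures (Frobenius metric) of B(0,t) ∩ P(A,A), B(0,t) ∩ P(A,B), B(0,t) ∩ P(B,B)
coincide. -/
theorem permSimilar_iff_hausdorff_measures_eq (n : ℕ) (hn : 2 ≤ n) (N : ℕ)
    (A B : Matrix (Fin n) (Fin n) ℝ)
    (hAsym : A.IsSymm) (hBsym : B.IsSymm)
    (hAnat : ∀ i j, ∃ k : ℕ, A i j = (k : ℝ))
    (hBnat : ∀ i j, ∃ k : ℕ, B i j = (k : ℝ))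
    (hArow : ∀ i, ∑ j, A i j = (N : ℝ)) (hBrow : ∀ i, ∑ j, B i j = (N : ℝ)) :
    (∃ P : Matrix (Fin n) (Fin n) ℝ, IsPermMatrix P ∧ B = P * A * Pᵀ) ↔
      (Module.finrank ℝ (Submodule.span ℝ (Pset A B)) =
          Module.finrank ℝ (Submodule.span ℝ (Pset A A)) ∧
       Module.finrank ℝ (Submodule.span ℝ (Pset B B)) =
          Module.finrank ℝ (Submodule.span ℝ (Pset A A)) ∧
       ∀ t ∈ Set.Ioc (0 : ℝ) (Real.sqrt ((n : ℝ) - 1)),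
         μH[(Module.finrank ℝ (Submodule.span ℝ (Pset A A)) : ℝ)]
             (matEuclid n '' ({X | frob X ≤ t} ∩ Pset A A)) =
           μH[(Module.finrank ℝ (Submodule.span ℝ (Pset A A)) : ℝ)]
             (matEuclid n '' ({X | frob X ≤ t} ∩ Pset A B)) ∧
         μH[(Module.finrank ℝ (Submodule.span ℝ (Pset A A)) : ℝ)]
             (matEuclid n '' ({X | frob X ≤ t} ∩ Pset A B)) =
           μH[(Module.finrank ℝ (Submodule.span ℝ (Pset A A)) : ℝ)]
             (matEuclid n '' ({X | frob X ≤ t} ∩ Pset B B))) := by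
  constructor
  · rintro ⟨P, hPperm, hB⟩
    obtain ⟨σ, hP⟩ := isPermMatrix_exists_perm hPperm
    have hd0 : (0:ℝ) ≤ (Module.finrank ℝ (Submodule.span ℝ (Pset A A)) : ℝ) :=
      Nat.cast_nonneg _
    refine ⟨finrank_span_Pset_right hP hB, finrank_span_Pset_conj hP hB, fun t _ => ?_⟩
    exact ⟨(measure_image_right_eq hP hB t hd0).symm,
      (measure_image_right_eq hP hB t hd0).trans (measure_image_conj_eq hP hB t hd0).symm⟩
  · rintro ⟨_, _, hmeas⟩
    exact backward_main hn hAsym hBsym hArow hBrow fun t ht => (hmeas t ht).1
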